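/- arXiv:1812.06214 — 4 statements merged into one kernel-verified Lean document; each statement's English description precedes it below -/
import Mathlib

section
/- Let G_k and G'_{k'} be mass-action systems, and for each x ∈ R_{>0}^n define flux vectors J(x) and J'(x) by J_{y→y'}(x) = k_{y→y'} x^y and J'_{y→y'}(x) = k'_{y→y'} x^y. Then the following are equivalent: (1) G_k and G'_{k'} are dynamically equivalent; (2) (G, J(x)) and (G', J'(x)) are flux equivalent for all x ∈ R_{>0}^n; (3) (G, J(x0)) and (G', J'(x0)) are flux equivalent for some x0 ∈ R_{>0}^n. -/
open Finset

noncomputable section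
open scoped Classical

abbrev Vtx (n : ℕ) := Fin n → ℝ

/-- A reaction network: a finite set of directed edges between points of ℝⁿ. -/
abbrev Net (n : ℕ) := Finset (Vtx n × Vtx n)

variable {n : ℕ}

/-- The vertices of a network. -/
def verts (G : Net n) : Finset (Vtx n) := G.image Prod.fst ∪ G.image Prod.snd

/-- The source vertices of a network. -/
def sources (G : Net n) : Finset (Vtx n) := G.image Prod.fst

/-- No self-loops. -/
def NoLoops (G : Net n) : Prop := ∀ e ∈ G, e.1 ≠ e.2

/-- `J` is a flux vector on `G`: positive on edges, zero on non-edges. -/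
def IsFlux (G : Net n) (J : Vtx n × Vtx n → ℝ) : Prop :=
  (∀ e ∈ G, 0 < J e) ∧ ∀ e, e ∉ G → J e = 0

/-- Total outgoing flux at a vertex. -/
def outSum (G : Net n) (J : Vtx n × Vtx n → ℝ) (v : Vtx n) : ℝ :=
  ∑ e ∈ G.filter (fun e => e.1 = v), J e

/-- Total incoming flux at a vertex. -/
def inSum (G : Net n) (J : Vtx n × Vtx n → ℝ) (v : Vtx n) : ℝ :=
  ∑ e ∈ G.filter (fun e => e.2 = v), J e

/-- Potential at a vertex: incoming minus outgoing flux (0 off the graph). -/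
def potential (G : Net n) (J : Vtx n × Vtx n → ℝ) (v : Vtx n) : ℝ :=
  inSum G J v - outSum G J v

/-- Complex-balanced flux: in-flux equals out-flux at every vertex. -/
def ComplexBalanced (G : Net n) (J : Vtx n × Vtx n → ℝ) : Prop :=
  ∀ v ∈ verts G, inSum G J v = outSum G J v

/-- Detailed-balanced flux: every edge is reversible and paired fluxes agree. -/
def DetailedBalanced (G : Net n) (J : Vtx n × Vtx n → ℝ) : Prop :=
  ∀ e ∈ G, (e.2, e.1) ∈ G ∧ J e = J (e.2, e.1)

/-- Steady state flux: flux-weighted reaction vectors sum to zero. -/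
def SteadyFlux (G : Net n) (J : Vtx n × Vtx n → ℝ) : Prop :=
  ∑ e ∈ G, J e • (e.2 - e.1) = 0

/-- Flux-weighted sum of outgoing reaction vectors at a vertex. -/
def netOut (G : Net n) (J : Vtx n × Vtx n → ℝ) (v : Vtx n) : Vtx n :=
  ∑ e ∈ G.filter (fun e => e.1 = v), J e • (e.2 - e.1)

/-- Flux equivalence of two flux systems. -/
def FluxEquiv (G : Net n) (J : Vtx n × Vtx n → ℝ)
    (G' : Net n) (J' : Vtx n × Vtx n → ℝ) : Prop :=
  ∀ v ∈ verts G ∪ verts G', netOut G J v = netOut G' J' v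

/-- Reachability along directed edges. -/
def Reachable (G : Net n) : Vtx n → Vtx n → Prop :=
  Relation.ReflTransGen (fun a b => (a, b) ∈ G)

/-- Weak reversibility: every edge lies on a directed cycle. -/
def WeaklyReversible (G : Net n) : Prop := ∀ e ∈ G, Reachable G e.2 e.1

/-- Reversibility: every edge has its reverse in the network. -/
def Reversible (G : Net n) : Prop := ∀ e ∈ G, (e.2, e.1) ∈ G

/-- Positive state. -/
def Pos (x : Vtx n) : Prop := ∀ i, 0 < x i

/-- Monomial `x^y = ∏ xᵢ^{yᵢ}` (real exponents). -/
def mono (x y : Vtx n) : ℝ := ∏ i, x i ^ y i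

/-- `k` is a vector of rate constants on `G`: positive on edges, zero off. -/
def IsMAS (G : Net n) (k : Vtx n × Vtx n → ℝ) : Prop :=
  (∀ e ∈ G, 0 < k e) ∧ ∀ e, e ∉ G → k e = 0

/-- The mass-action vector field of `G_k`. -/
def maf (G : Net n) (k : Vtx n × Vtx n → ℝ) (x : Vtx n) : Vtx n :=
  ∑ e ∈ G, (k e * mono x e.1) • (e.2 - e.1)

/-- Dynamical equivalence of mass-action systems. -/
def DynEquiv (G : Net n) (k : Vtx n × Vtx n → ℝ)
    (G' : Net n) (k' : Vtx n × Vtx n → ℝ) : Prop :=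
  ∀ x : Vtx n, Pos x → maf G k x = maf G' k' x

/-- `x` is a complex-balanced steady state of `G_k`. -/
def CBsteady (G : Net n) (k : Vtx n × Vtx n → ℝ) (x : Vtx n) : Prop :=
  ∀ v ∈ verts G,
    (∑ e ∈ G.filter (fun e => e.1 = v), k e * mono x v)
      = ∑ e ∈ G.filter (fun e => e.2 = v), k e * mono x e.1

/-- The stoichiometric subspace of a network. -/
def stoichSubspace (G : Net n) : Submodule ℝ (Vtx n) :=
  Submodule.span ℝ {d | ∃ e ∈ G, d = e.2 - e.1}

/-- Undirected connectivity relation of a network. -/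
def connRel (G : Net n) : Vtx n → Vtx n → Prop :=
  Relation.ReflTransGen (fun a b => (a, b) ∈ G ∨ (b, a) ∈ G)

/-- The number of connected components of a network. -/
def numComponents (G : Net n) : ℕ :=
  ((verts G).image (fun v => (verts G).filter (fun w => connRel G v w))).card

/-- The deficiency of a network. -/
def deficiency (G : Net n) : ℤ :=
  (verts G).card - numComponents G - Module.finrank ℝ (stoichSubspace G)

/-! Grouping reactions by their source, the mass-action vector field is `∑ᵥ x^v • N v`, where `N v`
is the `k`-weighted sum of the reaction vectors leaving `v`, and the flux-weighted sum at `v` for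
the flux `J(x)` is `x^v • N v`. As `x^v > 0`, flux equivalence at a single positive state already
says `N = N'` on all vertices. Dynamical equivalence says the same because distinct monomials are
linearly independent on the positive orthant: in logarithmic coordinates `x = exp t` they are the
distinct characters `t ↦ exp (t ⬝ᵥ y)` of `ℝⁿ`, and characters are linearly independent (Artin). -/

def expDotChar (y : Vtx n) : Multiplicative (Vtx n) →* ℝ where
  toFun t := Real.exp (t.toAdd ⬝ᵥ y)
  map_one' := by simp
  map_mul' s t := by simp [add_dotProduct, Real.exp_add]

lemma expDotChar_injective : Function.Injective (expDotChar (n := n)) := by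
  intro y y' h
  funext i
  have hi := DFunLike.congr_fun h (Multiplicative.ofAdd (Pi.single i 1))
  simpa [expDotChar, single_dotProduct] using hi

lemma mono_exp (t y : Vtx n) : mono (fun i => Real.exp (t i)) y = Real.exp (t ⬝ᵥ y) := by
  simp only [mono, dotProduct, Real.exp_sum, ← Real.exp_mul]

lemma linearIndependent_mono_exp :
    LinearIndependent ℝ (fun (y : Vtx n) (t : Vtx n) => mono (fun i => Real.exp (t i)) y) := by
  have hfun : (fun (y : Vtx n) (t : Vtx n) => mono (fun i => Real.exp (t i)) y) =
      (fun f : Multiplicative (Vtx n) →* ℝ => ⇑f) ∘ expDotChar :=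
    funext fun y => funext fun t => mono_exp t y
  rw [hfun]
  exact (linearIndependent_monoidHom _ ℝ).comp _ expDotChar_injective

lemma eq_zero_of_sum_mono_smul_eq_zero {ι : Type*} (S : Finset (Vtx n)) (c : Vtx n → ι → ℝ)
    (h : ∀ x : Vtx n, Pos x → ∑ y ∈ S, mono x y • c y = 0) : ∀ y ∈ S, c y = 0 := by
  intro y hy
  funext j
  refine linearIndependent_iff'.mp linearIndependent_mono_exp S (fun y => c y j) ?_ y hy
  funext t
  have ht := congrFun (h _ fun i => Real.exp_pos (t i)) j
  simpa [Finset.sum_apply, mul_comm] using ht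

lemma mono_pos {x : Vtx n} (hx : Pos x) (y : Vtx n) : 0 < mono x y :=
  Finset.prod_pos fun i _ => Real.rpow_pos_of_pos (hx i) _

lemma netOut_mul_mono (G : Net n) (k : Vtx n × Vtx n → ℝ) (x v : Vtx n) :
    netOut G (fun e => k e * mono x e.1) v = mono x v • netOut G k v := by
  rw [netOut, netOut, Finset.smul_sum]
  refine Finset.sum_congr rfl fun e he => ?_
  rw [(Finset.mem_filter.mp he).2, mul_comm, mul_smul]

lemma maf_eq_sum_mono_smul_netOut (G : Net n) (k : Vtx n × Vtx n → ℝ) (x : Vtx n)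
    {V : Finset (Vtx n)} (hV : sources G ⊆ V) :
    maf G k x = ∑ v ∈ V, mono x v • netOut G k v := by
  rw [maf, ← Finset.sum_fiberwise_of_maps_to fun e he => hV (Finset.mem_image_of_mem _ he)]
  simp only [← netOut_mul_mono]
  rfl

lemma sources_subset_verts (G : Net n) : sources G ⊆ verts G :=
  Finset.subset_union_left

lemma dynEquiv_iff_fluxEquiv (G G' : Net n) (k k' : Vtx n × Vtx n → ℝ) :
    DynEquiv G k G' k' ↔ FluxEquiv G k G' k' := by
  set V := verts G ∪ verts G'
  have hG : sources G ⊆ V := (sources_subset_verts G).trans Finset.subset_union_left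
  have hG' : sources G' ⊆ V := (sources_subset_verts G').trans Finset.subset_union_right
  have hmaf : ∀ x,
      maf G k x - maf G' k' x = ∑ v ∈ V, mono x v • (netOut G k v - netOut G' k' v) := by
    intro x
    simp only [maf_eq_sum_mono_smul_netOut G k x hG, maf_eq_sum_mono_smul_netOut G' k' x hG',
      smul_sub, Finset.sum_sub_distrib]
  constructor
  · intro h v hv
    have hzero := eq_zero_of_sum_mono_smul_eq_zero V (fun v => netOut G k v - netOut G' k' v)
      fun x hx => by rw [← hmaf, h x hx, sub_self]
    exact sub_eq_zero.mp (hzero v hv)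
  · intro h x _
    rw [← sub_eq_zero, hmaf]
    exact Finset.sum_eq_zero fun v hv => by rw [h v hv, sub_self, smul_zero]

lemma fluxEquiv_mul_mono_iff (G G' : Net n) (k k' : Vtx n × Vtx n → ℝ) {x : Vtx n}
    (hx : Pos x) :
    FluxEquiv G (fun e => k e * mono x e.1) G' (fun e => k' e * mono x e.1) ↔
      FluxEquiv G k G' k' := by
  simp only [FluxEquiv, netOut_mul_mono, smul_right_inj (mono_pos hx _).ne']

theorem stmt7_general (G G' : Net n) (k k' : Vtx n × Vtx n → ℝ) :
    (DynEquiv G k G' k' ↔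
      ∀ x : Vtx n, Pos x →
        FluxEquiv G (fun e => k e * mono x e.1) G' (fun e => k' e * mono x e.1)) ∧
    (DynEquiv G k G' k' ↔
      ∃ x : Vtx n, Pos x ∧
        FluxEquiv G (fun e => k e * mono x e.1) G' (fun e => k' e * mono x e.1)) := by
  have hone : Pos (fun _ => 1 : Vtx n) := fun _ => one_pos
  rw [dynEquiv_iff_fluxEquiv]
  constructor
  · exact ⟨fun h x hx => (fluxEquiv_mul_mono_iff G G' k k' hx).mpr h,
      fun h => (fluxEquiv_mul_mono_iff G G' k k' hone).mp (h _ hone)⟩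
  · exact ⟨fun h => ⟨_, hone, (fluxEquiv_mul_mono_iff G G' k k' hone).mpr h⟩,
      fun ⟨_, hx, h⟩ => (fluxEquiv_mul_mono_iff G G' k k' hx).mp h⟩

theorem stmt7 (G G' : Net n) (k k' : Vtx n × Vtx n → ℝ)
    (hk : IsMAS G k) (hk' : IsMAS G' k') :
    (DynEquiv G k G' k' ↔
      ∀ x : Vtx n, Pos x →
        FluxEquiv G (fun e => k e * mono x e.1) G' (fun e => k' e * mono x e.1)) ∧
    (DynEquiv G k G' k' ↔
      ∃ x : Vtx n, Pos x ∧
        FluxEquiv G (fun e => k e * mono x e.1) G' (fun e => k' e * mono x e.1)) :=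
  stmt7_general G G' k k'
end
end

section
/- Let G_k be a mass-action system and x0 ∈ R_{>0}^n, and define the flux vector J on G by J_{y→y'} = k_{y→y'} x0^y. If the flux system (G, J) is flux equivalent to a complex-balanced flux system (G', J'), then G_k is dynamically equivalent to a mass-action system G'_{k'} (with k'_{y→y'} = J'_{y→y'} / x0^y) for which x0 is a complex-balanced steady state. -/
open Finset

noncomputable section
open scoped Classical

variable {n : ℕ}

lemma sum_smul_eq_sum_smul_netOut (G : Net n) (J : Vtx n × Vtx n → ℝ) (w : Vtx n → ℝ)
    {S : Finset (Vtx n)} (hS : sources G ⊆ S) :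
    ∑ e ∈ G, (w e.1 * J e) • (e.2 - e.1) = ∑ v ∈ S, w v • netOut G J v := by
  have hmaps : ∀ e ∈ G, e.1 ∈ S := fun e he => hS (mem_image_of_mem Prod.fst he)
  rw [← sum_fiberwise_of_maps_to hmaps]
  refine sum_congr rfl fun v _ => ?_
  rw [netOut, smul_sum]
  refine sum_congr rfl fun e he => ?_
  rw [← (mem_filter.1 he).2, smul_smul]

lemma maf_eq_sum_netOut (G : Net n) (k : Vtx n × Vtx n → ℝ) {x0 : Vtx n} (hx0 : Pos x0)
    (x : Vtx n) {S : Finset (Vtx n)} (hS : sources G ⊆ S) :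
    maf G k x = ∑ v ∈ S, (mono x v / mono x0 v) • netOut G (fun e => k e * mono x0 e.1) v := by
  rw [maf, ← sum_smul_eq_sum_smul_netOut G _ _ hS]
  refine sum_congr rfl fun e _ => ?_
  have hm : mono x0 e.1 ≠ 0 := (mono_pos hx0 e.1).ne'
  congr 1
  field_simp

lemma FluxEquiv.dynEquiv {G G' : Net n} {k k' : Vtx n × Vtx n → ℝ} {x0 : Vtx n} (hx0 : Pos x0)
    (hFE : FluxEquiv G (fun e => k e * mono x0 e.1) G' (fun e => k' e * mono x0 e.1)) :
    DynEquiv G k G' k' := by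
  intro x _
  have hS : sources G ⊆ verts G ∪ verts G' := subset_union_left.trans subset_union_left
  have hS' : sources G' ⊆ verts G ∪ verts G' := subset_union_left.trans subset_union_right
  rw [maf_eq_sum_netOut G k hx0 x hS, maf_eq_sum_netOut G' k' hx0 x hS']
  exact sum_congr rfl fun v hv => by rw [hFE v hv]

lemma ComplexBalanced.cBsteady_div_mono {G : Net n} {J : Vtx n × Vtx n → ℝ}
    (hCB : ComplexBalanced G J) {x0 : Vtx n} (hx0 : Pos x0) :
    CBsteady G (fun e => J e / mono x0 e.1) x0 := by
  intro v hv
  have hout : ∑ e ∈ G.filter (fun e => e.1 = v), J e / mono x0 e.1 * mono x0 v = outSum G J v :=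
    sum_congr rfl fun e he => by
      rw [← (mem_filter.1 he).2, div_mul_cancel₀ _ (mono_pos hx0 e.1).ne']
  have hin : ∑ e ∈ G.filter (fun e => e.2 = v), J e / mono x0 e.1 * mono x0 e.1 = inSum G J v :=
    sum_congr rfl fun e _ => div_mul_cancel₀ _ (mono_pos hx0 e.1).ne'
  rw [hout, hin, hCB v hv]

theorem stmt9_general (G G' : Net n) (k J' : Vtx n × Vtx n → ℝ)
    (x0 : Vtx n) (hx0 : Pos x0)
    (hFE : FluxEquiv G (fun e => k e * mono x0 e.1) G' J')
    (hCB : ComplexBalanced G' J') :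
    DynEquiv G k G' (fun e => J' e / mono x0 e.1) ∧
      CBsteady G' (fun e => J' e / mono x0 e.1) x0 := by
  have hflux : (fun e => J' e / mono x0 e.1 * mono x0 e.1) = J' :=
    funext fun e => div_mul_cancel₀ _ (mono_pos hx0 e.1).ne'
  exact ⟨FluxEquiv.dynEquiv hx0 (hflux.symm ▸ hFE), hCB.cBsteady_div_mono hx0⟩

theorem stmt9 (G G' : Net n) (k J' : Vtx n × Vtx n → ℝ) (hk : IsMAS G k)
    (x0 : Vtx n) (hx0 : Pos x0) (hJ' : IsFlux G' J')
    (hFE : FluxEquiv G (fun e => k e * mono x0 e.1) G' J')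
    (hCB : ComplexBalanced G' J') :
    DynEquiv G k G' (fun e => J' e / mono x0 e.1) ∧
      CBsteady G' (fun e => J' e / mono x0 e.1) x0 :=
  stmt9_general G G' k J' x0 hx0 hFE hCB
end
end

section
/- Let G consist of the reactions z → y* and y* → y_j for j = 1,…,M, with flux vector J. Suppose y* is a virtual source (Σ_j J_{y*→y_j}(y_j - y*) = 0) and its potential is zero (Σ_j J_{y*→y_j} = J_{z→y*}). Let G' be obtained by removing all edges adjacent to y* and adding edges z → y_j with fluxes J'_{z→y_j} = J_{y*→y_j}. Then (G', J') is flux equivalent to (G, J), and the potential at every vertex is preserved: P_{(G',J')}(y_j) = P_{(G,J)}(y_j) for all j and P_{(G',J')}(z) = P_{(G,J)}(z). -/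
open Finset

noncomputable section
open scoped Classical

variable {n : ℕ}

/-!
Both flux systems are images of indexed families of weighted reactions, so every flux sum at a
vertex becomes a sum over the indices. Out of `y*` the routed system sends
`∑ Jⱼ (yⱼ - y*) = 0` and out of `z` it sends `J₀ (y* - z)`; the direct system sends out of `z`
`∑ Jⱼ (yⱼ - z) = ∑ Jⱼ (yⱼ - y*) + (∑ Jⱼ) (y* - z)`, the same vector because `∑ Jⱼ = J₀`.
Away from `y*` the in- and out-fluxes agree for the same reason.
-/

theorem sum_smul_sub_eq_add_sum_smul_sub {ι R M : Type*} [Semiring R] [AddCommGroup M]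
    [Module R M] (s : Finset ι) (w : ι → R) (x : ι → M) (c z : M) :
    ∑ i ∈ s, w i • (x i - z) = ∑ i ∈ s, w i • (x i - c) + (∑ i ∈ s, w i) • (c - z) := by
  simp only [Finset.sum_smul, ← Finset.sum_add_distrib, ← smul_add, sub_add_sub_cancel]

section PooledFlux

variable {ι : Type*} [Fintype ι]

theorem sum_filter_image_fiberwise_smul {α R M : Type*} [DecidableEq α] [Semiring R]
    [AddCommMonoid M] [Module R M] (r : ι → α) (w : ι → R) (p : α → Prop) [DecidablePred p]
    (f : α → M) :
    ∑ a ∈ (univ.image r).filter p, (∑ i ∈ univ.filter (fun i => r i = a), w i) • f a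
      = ∑ i ∈ univ.filter (fun i => p (r i)), w i • f (r i) := by
  rw [← Finset.sum_fiberwise_of_maps_to (g := r) (t := (univ.image r).filter p)
    (fun i hi => by simpa using hi)]
  refine Finset.sum_congr rfl fun a ha => ?_
  rw [Finset.sum_smul, Finset.filter_filter]
  have hpa : p a := (Finset.mem_filter.mp ha).2
  refine Finset.sum_congr ?_ fun i hi => by rw [(Finset.mem_filter.mp hi).2.2]
  ext i
  simp only [Finset.mem_filter, Finset.mem_univ, true_and]
  exact ⟨fun h => ⟨h ▸ hpa, h⟩, And.right⟩

/-- The flux of the network `univ.image r` in which the reactions `r i` carry weights `w i`: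
reactions that coincide as edges pool their weights. -/
def pooledFlux (r : ι → Vtx n × Vtx n) (w : ι → ℝ) (e : Vtx n × Vtx n) : ℝ :=
  ∑ i ∈ univ.filter (fun i => r i = e), w i

variable (r : ι → Vtx n × Vtx n) (w : ι → ℝ) (v : Vtx n)

theorem outSum_pooledFlux :
    outSum (univ.image r) (pooledFlux r w) v
      = ∑ i ∈ univ.filter (fun i => (r i).1 = v), w i := by
  simpa [outSum, pooledFlux] using
    sum_filter_image_fiberwise_smul r w (fun e => e.1 = v) (fun _ => (1 : ℝ))

theorem inSum_pooledFlux :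
    inSum (univ.image r) (pooledFlux r w) v
      = ∑ i ∈ univ.filter (fun i => (r i).2 = v), w i := by
  simpa [inSum, pooledFlux] using
    sum_filter_image_fiberwise_smul r w (fun e => e.2 = v) (fun _ => (1 : ℝ))

theorem netOut_pooledFlux :
    netOut (univ.image r) (pooledFlux r w) v
      = ∑ i ∈ univ.filter (fun i => (r i).1 = v), w i • ((r i).2 - (r i).1) :=
  sum_filter_image_fiberwise_smul r w (fun e => e.1 = v) (fun e => e.2 - e.1)

end PooledFlux

section VirtualSource

variable {M : ℕ} (z ystar : Vtx n) (y : Fin M → Vtx n) (J0 : ℝ) (Jout : Fin M → ℝ)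

/-- The reactions `z → y*` (index `none`) and `y* → yⱼ` (index `some j`). -/
def routedReactions : Option (Fin M) → Vtx n × Vtx n :=
  fun i => i.elim (z, ystar) fun j => (ystar, y j)

def routedWeights : Option (Fin M) → ℝ := fun i => i.elim J0 Jout

def directReactions : Fin M → Vtx n × Vtx n := fun j => (z, y j)

theorem image_routedReactions :
    univ.image (routedReactions z ystar y)
      = insert (z, ystar) (univ.image fun j => (ystar, y j)) := by
  ext e
  simp [routedReactions, Option.exists, eq_comm]

theorem pooledFlux_routedReactions :
    pooledFlux (routedReactions z ystar y) (routedWeights J0 Jout) = fun e =>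
      (if e = (z, ystar) then J0 else 0)
        + ∑ j ∈ univ.filter (fun j => (ystar, y j) = e), Jout j := by
  funext e
  simp only [pooledFlux, routedReactions, routedWeights, eq_comm, Finset.sum_filter,
    Fintype.sum_option, Option.elim_none, Option.elim_some]
  -- the two sides differ only in their `Decidable` instances
  rfl

variable {z ystar y J0 Jout}

theorem netOut_direct_eq_routed (hzs : z ≠ ystar) (hvs : ∑ j, Jout j • (y j - ystar) = 0)
    (hpot : ∑ j, Jout j = J0) (v : Vtx n) :
    netOut (univ.image (directReactions z y)) (pooledFlux (directReactions z y) Jout) v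
      = netOut (univ.image (routedReactions z ystar y))
          (pooledFlux (routedReactions z ystar y) (routedWeights J0 Jout)) v := by
  rw [netOut_pooledFlux, netOut_pooledFlux]
  simp only [Finset.sum_filter, Fintype.sum_option]
  by_cases hz : z = v
  · subst hz
    simp only [directReactions, routedReactions, routedWeights, Option.elim_none,
      Option.elim_some, hzs.symm, ↓reduceIte, Finset.sum_const_zero, add_zero]
    rw [sum_smul_sub_eq_add_sum_smul_sub _ _ _ ystar, hvs, hpot, zero_add]
  · by_cases hy : ystar = v
    · subst hy
      simp [directReactions, routedReactions, routedWeights, hz, hvs]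
    · simp [directReactions, routedReactions, hz, hy]

theorem inSum_direct_eq_routed {v : Vtx n} (hv : v ≠ ystar) :
    inSum (univ.image (directReactions z y)) (pooledFlux (directReactions z y) Jout) v
      = inSum (univ.image (routedReactions z ystar y))
          (pooledFlux (routedReactions z ystar y) (routedWeights J0 Jout)) v := by
  rw [inSum_pooledFlux, inSum_pooledFlux]
  simp only [Finset.sum_filter, Fintype.sum_option]
  simp only [directReactions, routedReactions, routedWeights, Option.elim_none,
    Option.elim_some, hv.symm, ↓reduceIte, zero_add]
  -- the two sides differ only in their `Decidable` instances
  rfl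

theorem outSum_direct_eq_routed (hpot : ∑ j, Jout j = J0) {v : Vtx n} (hv : v ≠ ystar) :
    outSum (univ.image (directReactions z y)) (pooledFlux (directReactions z y) Jout) v
      = outSum (univ.image (routedReactions z ystar y))
          (pooledFlux (routedReactions z ystar y) (routedWeights J0 Jout)) v := by
  rw [outSum_pooledFlux, outSum_pooledFlux]
  simp only [Finset.sum_filter, Fintype.sum_option]
  by_cases hz : z = v <;>
    simp [directReactions, routedReactions, routedWeights, hv.symm, hz, hpot]

theorem potential_direct_eq_routed (hpot : ∑ j, Jout j = J0) {v : Vtx n} (hv : v ≠ ystar) :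
    potential (univ.image (directReactions z y)) (pooledFlux (directReactions z y) Jout) v
      = potential (univ.image (routedReactions z ystar y))
          (pooledFlux (routedReactions z ystar y) (routedWeights J0 Jout)) v := by
  rw [potential, potential, inSum_direct_eq_routed hv, outSum_direct_eq_routed hpot hv]

end VirtualSource

theorem stmt10_general (z ystar : Vtx n) (M : ℕ) (y : Fin M → Vtx n)
    (J0 : ℝ) (Jout : Fin M → ℝ)
    (hzs : z ≠ ystar) (hys : ∀ j, y j ≠ ystar)
    (hvs : ∑ j, Jout j • (y j - ystar) = 0)
    (hpot : ∑ j, Jout j = J0) :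
    let G : Net n := insert (z, ystar)
      ((Finset.univ : Finset (Fin M)).image fun j => (ystar, y j))
    let J : Vtx n × Vtx n → ℝ := fun e =>
      (if e = (z, ystar) then J0 else 0)
        + ∑ j ∈ Finset.univ.filter (fun j => (ystar, y j) = e), Jout j
    let G' : Net n := (Finset.univ : Finset (Fin M)).image fun j => (z, y j)
    let J' : Vtx n × Vtx n → ℝ := fun e =>
      ∑ j ∈ Finset.univ.filter (fun j => (z, y j) = e), Jout j
    FluxEquiv G J G' J' ∧
      (∀ j, potential G' J' (y j) = potential G J (y j)) ∧
      potential G' J' z = potential G J z := by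
  intro G J G' J'
  rw [show G = _ from (image_routedReactions z ystar y).symm,
    show J = _ from (pooledFlux_routedReactions z ystar y J0 Jout).symm]
  exact ⟨fun v _ => (netOut_direct_eq_routed hzs hvs hpot v).symm,
    fun j => potential_direct_eq_routed hpot (hys j), potential_direct_eq_routed hpot hzs⟩

theorem stmt10 (z ystar : Vtx n) (M : ℕ) (y : Fin M → Vtx n)
    (J0 : ℝ) (Jout : Fin M → ℝ) (hJ0 : 0 < J0) (hJout : ∀ j, 0 < Jout j)
    (hzs : z ≠ ystar) (hys : ∀ j, y j ≠ ystar)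
    (hvs : ∑ j, Jout j • (y j - ystar) = 0)
    (hpot : ∑ j, Jout j = J0) :
    let G : Net n := insert (z, ystar)
      ((Finset.univ : Finset (Fin M)).image fun j => (ystar, y j))
    let J : Vtx n × Vtx n → ℝ := fun e =>
      (if e = (z, ystar) then J0 else 0)
        + ∑ j ∈ Finset.univ.filter (fun j => (ystar, y j) = e), Jout j
    let G' : Net n := (Finset.univ : Finset (Fin M)).image fun j => (z, y j)
    let J' : Vtx n × Vtx n → ℝ := fun e =>
      ∑ j ∈ Finset.univ.filter (fun j => (z, y j) = e), Jout j
    FluxEquiv G J G' J' ∧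
      (∀ j, potential G' J' (y j) = potential G J (y j)) ∧
      potential G' J' z = potential G J z :=
  stmt10_general z ystar M y J0 Jout hzs hys hvs hpot
end
end

section
/- Let G be a reaction network with source vertex set V_{G,s}. There exists a flux vector J on G such that (G, J) is flux equivalent to some complex-balanced flux system if and only if there exists a flux vector J on G such that (G, J) is flux equivalent to some complex-balanced flux system (G', J') with V_{G'} ⊆ V_{G,s}. -/
open Finset

noncomputable section
open scoped Classical

variable {n : ℕ}

/-!
Let `(G', J')` be complex balanced and flux equivalent to `(G, J)`. At a vertex `v` of `G'` that
is not a source of `G`, flux equivalence forces the net outflow `∑ J'(v, y) (y - v)` of `G'` to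
vanish: the reaction vectors leaving `v`, weighted by `J'`, average to `v` itself. Delete `v` and
replace every path `u → v → y` by a direct edge `u → y` carrying `J'(u, v) J'(v, y) / T`, where
`T` is the flux through `v`. Since a balanced vertex passes on all it receives, in- and out-flux
are unchanged at every other vertex, and by the averaging property so are the net outflows.
Repeating this removes every vertex outside `V_{G,s}`.
-/

lemma fst_mem_verts {G : Net n} {e : Vtx n × Vtx n} (he : e ∈ G) : e.1 ∈ verts G :=
  mem_union_left _ (mem_image_of_mem _ he)

lemma snd_mem_verts {G : Net n} {e : Vtx n × Vtx n} (he : e ∈ G) : e.2 ∈ verts G :=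
  mem_union_right _ (mem_image_of_mem _ he)

lemma subset_verts_product (G : Net n) : G ⊆ verts G ×ˢ verts G :=
  fun _ he => mem_product.2 ⟨fst_mem_verts he, snd_mem_verts he⟩

lemma verts_subset_of_subset_product {G : Net n} {S : Finset (Vtx n)} (h : G ⊆ S ×ˢ S) :
    verts G ⊆ S := by
  intro w hw
  rcases mem_union.1 hw with hw | hw <;> obtain ⟨e, he, rfl⟩ := mem_image.1 hw
  exacts [(mem_product.1 (h he)).1, (mem_product.1 (h he)).2]

lemma netOut_eq_zero_of_notMem_sources {G : Net n} {v : Vtx n} (hv : v ∉ sources G)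
    (J : Vtx n × Vtx n → ℝ) : netOut G J v = 0 := by
  refine sum_eq_zero fun e he => absurd ?_ hv
  obtain ⟨heG, rfl⟩ := mem_filter.1 he
  exact mem_image_of_mem _ heG

lemma fluxEquiv_iff {G G' : Net n} {J J' : Vtx n × Vtx n → ℝ} :
    FluxEquiv G J G' J' ↔ ∀ v, netOut G J v = netOut G' J' v := by
  refine ⟨fun h v => ?_, fun h v _ => h v⟩
  by_cases hv : v ∈ verts G ∪ verts G'
  · exact h v hv
  · rw [mem_union, not_or] at hv
    rw [netOut_eq_zero_of_notMem_sources fun h => hv.1 (mem_union_left _ h),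
      netOut_eq_zero_of_notMem_sources fun h => hv.2 (mem_union_left _ h)]

section Sums

variable {M : Type*} [AddCommMonoid M] {G : Net n} {S : Finset (Vtx n)}
  {F : Vtx n × Vtx n → M}

lemma sum_filter_fst_eq (hG : G ⊆ S ×ˢ S) (hF : ∀ e ∉ G, F e = 0) (w : Vtx n) :
    ∑ e ∈ G.filter (fun e => e.1 = w), F e = ∑ y ∈ S, F (w, y) := by
  refine (sum_subset (fun e he => ?_) (fun e he he' => hF e fun heG => he' ?_)).trans
    (sum_map S (Function.Embedding.sectR w _) F)
  · obtain ⟨heG, rfl⟩ := mem_filter.1 he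
    exact mem_map.2 ⟨e.2, (mem_product.1 (hG heG)).2, rfl⟩
  · obtain ⟨y, -, rfl⟩ := mem_map.1 he
    exact mem_filter.2 ⟨heG, rfl⟩

lemma sum_filter_snd_eq (hG : G ⊆ S ×ˢ S) (hF : ∀ e ∉ G, F e = 0) (w : Vtx n) :
    ∑ e ∈ G.filter (fun e => e.2 = w), F e = ∑ u ∈ S, F (u, w) := by
  refine (sum_subset (fun e he => ?_) (fun e he he' => hF e fun heG => he' ?_)).trans
    (sum_map S (Function.Embedding.sectL _ w) F)
  · obtain ⟨heG, rfl⟩ := mem_filter.1 he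
    exact mem_map.2 ⟨e.1, (mem_product.1 (hG heG)).1, rfl⟩
  · obtain ⟨u, -, rfl⟩ := mem_map.1 he
    exact mem_filter.2 ⟨heG, rfl⟩

end Sums

section Flux

variable {G : Net n} {S : Finset (Vtx n)} {J : Vtx n × Vtx n → ℝ}

lemma outSum_eq_sum (hG : G ⊆ S ×ˢ S) (hJ : ∀ e ∉ G, J e = 0) (w : Vtx n) :
    outSum G J w = ∑ y ∈ S, J (w, y) :=
  sum_filter_fst_eq hG hJ w

lemma inSum_eq_sum (hG : G ⊆ S ×ˢ S) (hJ : ∀ e ∉ G, J e = 0) (w : Vtx n) :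
    inSum G J w = ∑ u ∈ S, J (u, w) :=
  sum_filter_snd_eq hG hJ w

lemma netOut_eq_sum (hG : G ⊆ S ×ˢ S) (hJ : ∀ e ∉ G, J e = 0) (w : Vtx n) :
    netOut G J w = ∑ y ∈ S, J (w, y) • (y - w) :=
  sum_filter_fst_eq (F := fun e => J e • (e.2 - e.1)) hG
    (fun e he => by simp only [hJ e he, zero_smul]) w

lemma isFlux_filter_pos (hJ₀ : ∀ e, 0 ≤ J e) (hJ : ∀ e ∉ G, J e = 0) :
    IsFlux (G.filter fun e => 0 < J e) J := by
  refine ⟨fun e he => (mem_filter.1 he).2, fun e he => ?_⟩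
  by_cases heG : e ∈ G
  · exact le_antisymm (not_lt.1 fun h => he (mem_filter.2 ⟨heG, h⟩)) (hJ₀ e)
  · exact hJ e heG

namespace IsFlux

lemma nonneg (hJ : IsFlux G J) (e : Vtx n × Vtx n) : 0 ≤ J e := by
  by_cases he : e ∈ G
  · exact (hJ.1 e he).le
  · exact (hJ.2 e he).ge

lemma eq_zero_of_fst_notMem (hJ : IsFlux G J) {e : Vtx n × Vtx n} (h : e.1 ∉ verts G) :
    J e = 0 :=
  hJ.2 e fun he => h (fst_mem_verts he)

lemma eq_zero_of_snd_notMem (hJ : IsFlux G J) {e : Vtx n × Vtx n} (h : e.2 ∉ verts G) :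
    J e = 0 :=
  hJ.2 e fun he => h (snd_mem_verts he)

end IsFlux

end Flux

section Bypass

variable (G : Net n) (J : Vtx n × Vtx n → ℝ) (v : Vtx n)

-- loops at `v` are left out: their flux does not pass through `v`
def transitFlux : ℝ := ∑ y ∈ (verts G).erase v, J (v, y)

def bypassFlux (e : Vtx n × Vtx n) : ℝ :=
  if e.1 = v ∨ e.2 = v then 0 else J e + J (e.1, v) * J (v, e.2) / transitFlux G J v

def bypass : Net n :=
  ((verts G).erase v ×ˢ (verts G).erase v).filter fun e => 0 < bypassFlux G J v e

variable {G J v} {w : Vtx n}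

lemma bypassFlux_of_ne {u y : Vtx n} (hu : u ≠ v) (hy : y ≠ v) :
    bypassFlux G J v (u, y) = J (u, y) + J (u, v) * J (v, y) / transitFlux G J v := by
  simp [bypassFlux, hu, hy]

lemma bypassFlux_nonneg (hJ : IsFlux G J) (e : Vtx n × Vtx n) : 0 ≤ bypassFlux G J v e := by
  unfold bypassFlux
  split_ifs
  · exact le_rfl
  · exact add_nonneg (hJ.nonneg e) (div_nonneg (mul_nonneg (hJ.nonneg _) (hJ.nonneg _))
      (sum_nonneg fun y _ => hJ.nonneg _))

lemma bypassFlux_eq_zero (hJ : IsFlux G J) {e : Vtx n × Vtx n}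
    (he : e ∉ (verts G).erase v ×ˢ (verts G).erase v) : bypassFlux G J v e = 0 := by
  unfold bypassFlux
  split_ifs with hev
  · rfl
  rw [not_or] at hev
  simp only [mem_product, mem_erase, hev, ne_eq, not_false_eq_true, true_and, not_and] at he
  by_cases h₁ : e.1 ∈ verts G
  · rw [hJ.eq_zero_of_snd_notMem (he h₁), hJ.eq_zero_of_snd_notMem (e := (v, e.2)) (he h₁)]
    simp
  · rw [hJ.eq_zero_of_fst_notMem h₁, hJ.eq_zero_of_fst_notMem (e := (e.1, v)) h₁]
    simp

lemma bypass_subset : bypass G J v ⊆ (verts G).erase v ×ˢ (verts G).erase v :=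
  filter_subset _ _

lemma isFlux_bypass (hJ : IsFlux G J) : IsFlux (bypass G J v) (bypassFlux G J v) :=
  isFlux_filter_pos (bypassFlux_nonneg hJ) fun _ => bypassFlux_eq_zero hJ

lemma verts_bypass_subset : verts (bypass G J v) ⊆ (verts G).erase v :=
  verts_subset_of_subset_product bypass_subset

lemma sum_erase_inflow_eq_transitFlux (hJ : IsFlux G J) (hCB : ComplexBalanced G J)
    (hv : v ∈ verts G) :
    ∑ u ∈ (verts G).erase v, J (u, v) = transitFlux G J v := by
  have h := hCB v hv
  rw [inSum_eq_sum (subset_verts_product G) hJ.2, outSum_eq_sum (subset_verts_product G) hJ.2,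
    ← add_sum_erase _ _ hv, ← add_sum_erase _ _ hv] at h
  exact add_left_cancel h

lemma eq_zero_of_transitFlux_eq_zero (hJ : IsFlux G J) (hCB : ComplexBalanced G J)
    (hv : v ∈ verts G) (hT : transitFlux G J v = 0) {x : Vtx n} (hx : x ≠ v) :
    J (v, x) = 0 ∧ J (x, v) = 0 := by
  by_cases hxG : x ∈ verts G
  · have hxS : x ∈ (verts G).erase v := mem_erase.2 ⟨hx, hxG⟩
    have hin := (sum_erase_inflow_eq_transitFlux hJ hCB hv).trans hT
    exact ⟨(sum_eq_zero_iff_of_nonneg fun y _ => hJ.nonneg _).1 hT x hxS,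
      (sum_eq_zero_iff_of_nonneg fun u _ => hJ.nonneg _).1 hin x hxS⟩
  · exact ⟨hJ.eq_zero_of_snd_notMem hxG, hJ.eq_zero_of_fst_notMem hxG⟩

lemma sum_smul_sub_eq_transitFlux_smul (hJ : IsFlux G J) (hnet : netOut G J v = 0) (w : Vtx n) :
    ∑ y ∈ (verts G).erase v, J (v, y) • (y - w) = transitFlux G J v • (v - w) := by
  have h₀ : ∑ y ∈ (verts G).erase v, J (v, y) • (y - v) = 0 := by
    rw [sum_erase _ (by rw [sub_self, smul_zero]),
      ← netOut_eq_sum (subset_verts_product G) hJ.2, hnet]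
  calc ∑ y ∈ (verts G).erase v, J (v, y) • (y - w)
      = ∑ y ∈ (verts G).erase v, (J (v, y) • (y - v) + J (v, y) • (v - w)) :=
        sum_congr rfl fun y _ => by rw [← smul_add, sub_add_sub_cancel]
    _ = transitFlux G J v • (v - w) := by rw [sum_add_distrib, h₀, zero_add, ← sum_smul]; rfl

lemma sum_bypassFlux_row_smul {M : Type*} [AddCommMonoid M] [Module ℝ M] (hw : w ≠ v)
    (φ : Vtx n → M) :
    ∑ y ∈ (verts G).erase v, bypassFlux G J v (w, y) • φ y =
      ∑ y ∈ (verts G).erase v, J (w, y) • φ y +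
        (J (w, v) / transitFlux G J v) • ∑ y ∈ (verts G).erase v, J (v, y) • φ y := by
  rw [smul_sum, ← sum_add_distrib]
  refine sum_congr rfl fun y hy => ?_
  rw [bypassFlux_of_ne hw (ne_of_mem_erase hy), add_smul, smul_smul, mul_div_right_comm]

lemma sum_bypassFlux_row {M : Type*} [AddCommMonoid M] [Module ℝ M] (hJ : IsFlux G J)
    (hCB : ComplexBalanced G J) (hv : v ∈ verts G) (hw : w ≠ v) (φ : Vtx n → M)
    (hφ : ∑ y ∈ (verts G).erase v, J (v, y) • φ y = transitFlux G J v • φ v) :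
    ∑ y ∈ (verts G).erase v, bypassFlux G J v (w, y) • φ y = ∑ y ∈ verts G, J (w, y) • φ y := by
  -- if `transitFlux G J v = 0` then no flux enters `v`, so dividing by it does no harm
  rw [sum_bypassFlux_row_smul hw, hφ, smul_smul,
    div_mul_cancel_of_imp fun hT => (eq_zero_of_transitFlux_eq_zero hJ hCB hv hT hw).2,
    ← add_sum_erase _ _ hv, add_comm]

lemma sum_bypassFlux_col (hJ : IsFlux G J) (hCB : ComplexBalanced G J) (hv : v ∈ verts G)
    (hw : w ≠ v) :
    ∑ u ∈ (verts G).erase v, bypassFlux G J v (u, w) = ∑ u ∈ verts G, J (u, w) := by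
  have h : ∑ u ∈ (verts G).erase v, bypassFlux G J v (u, w) =
      ∑ u ∈ (verts G).erase v, J (u, w) +
        (∑ u ∈ (verts G).erase v, J (u, v)) * J (v, w) / transitFlux G J v := by
    rw [sum_mul, sum_div, ← sum_add_distrib]
    exact sum_congr rfl fun u hu => bypassFlux_of_ne (ne_of_mem_erase hu) hw
  rw [h, sum_erase_inflow_eq_transitFlux hJ hCB hv,
    mul_div_cancel_left_of_imp fun hT => (eq_zero_of_transitFlux_eq_zero hJ hCB hv hT hw).1,
    ← add_sum_erase _ _ hv, add_comm]

lemma outSum_bypass (hJ : IsFlux G J) (hCB : ComplexBalanced G J) (hv : v ∈ verts G)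
    (hw : w ≠ v) : outSum (bypass G J v) (bypassFlux G J v) w = outSum G J w := by
  rw [outSum_eq_sum bypass_subset (isFlux_bypass hJ).2,
    outSum_eq_sum (subset_verts_product G) hJ.2]
  simpa using sum_bypassFlux_row hJ hCB hv hw (fun _ => (1 : ℝ)) (by simp [transitFlux])

lemma inSum_bypass (hJ : IsFlux G J) (hCB : ComplexBalanced G J) (hv : v ∈ verts G)
    (hw : w ≠ v) : inSum (bypass G J v) (bypassFlux G J v) w = inSum G J w := by
  rw [inSum_eq_sum bypass_subset (isFlux_bypass hJ).2,
    inSum_eq_sum (subset_verts_product G) hJ.2]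
  exact sum_bypassFlux_col hJ hCB hv hw

lemma complexBalanced_bypass (hJ : IsFlux G J) (hCB : ComplexBalanced G J) (hv : v ∈ verts G) :
    ComplexBalanced (bypass G J v) (bypassFlux G J v) := by
  intro w hw
  obtain ⟨hwv, hwG⟩ := mem_erase.1 (verts_bypass_subset hw)
  rw [inSum_bypass hJ hCB hv hwv, outSum_bypass hJ hCB hv hwv]
  exact hCB w hwG

lemma netOut_bypass (hJ : IsFlux G J) (hCB : ComplexBalanced G J) (hv : v ∈ verts G)
    (hnet : netOut G J v = 0) (w : Vtx n) :
    netOut (bypass G J v) (bypassFlux G J v) w = netOut G J w := by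
  by_cases hwv : w = v
  · subst hwv
    rw [hnet, netOut_eq_zero_of_notMem_sources fun h =>
      (mem_erase.1 (verts_bypass_subset (mem_union_left _ h))).1 rfl]
  · rw [netOut_eq_sum bypass_subset (isFlux_bypass hJ).2,
      netOut_eq_sum (subset_verts_product G) hJ.2]
    exact sum_bypassFlux_row hJ hCB hv hwv (· - w) (sum_smul_sub_eq_transitFlux_smul hJ hnet w)

end Bypass

theorem exists_complexBalanced_verts_subset (A : Finset (Vtx n)) (G : Net n)
    (J : Vtx n × Vtx n → ℝ) (hJ : IsFlux G J) (hCB : ComplexBalanced G J)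
    (hA : ∀ v ∉ A, netOut G J v = 0) :
    ∃ (G' : Net n) (J' : Vtx n × Vtx n → ℝ), IsFlux G' J' ∧ ComplexBalanced G' J' ∧
      (∀ w, netOut G' J' w = netOut G J w) ∧ verts G' ⊆ A := by
  induction hk : (verts G \ A).card using Nat.strong_induction_on generalizing G J with
  | _ k ih =>
  by_cases hGA : verts G ⊆ A
  · exact ⟨G, J, hJ, hCB, fun _ => rfl, hGA⟩
  obtain ⟨v, hv, hvA⟩ := not_subset.1 hGA
  have hnet := netOut_bypass hJ hCB hv (hA v hvA)
  have hlt : (verts (bypass G J v) \ A).card < k := by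
    refine hk ▸ card_lt_card ((ssubset_iff_of_subset
      (sdiff_subset_sdiff (verts_bypass_subset.trans (erase_subset _ _)) le_rfl)).2
      ⟨v, mem_sdiff.2 ⟨hv, hvA⟩, fun h => ?_⟩)
    exact (mem_erase.1 (verts_bypass_subset (mem_sdiff.1 h).1)).1 rfl
  obtain ⟨G', J', hJ', hCB', hnet', hG'A⟩ := ih _ hlt (bypass G J v) (bypassFlux G J v)
    (isFlux_bypass hJ) (complexBalanced_bypass hJ hCB hv)
    (fun w hw => (hnet w).trans (hA w hw)) rfl
  exact ⟨G', J', hJ', hCB', fun w => (hnet' w).trans (hnet w), hG'A⟩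

theorem stmt19 (G : Net n) :
    (∃ J : Vtx n × Vtx n → ℝ, IsFlux G J ∧
      ∃ (G' : Net n) (J' : Vtx n × Vtx n → ℝ),
        IsFlux G' J' ∧ ComplexBalanced G' J' ∧ FluxEquiv G J G' J') ↔
    (∃ J : Vtx n × Vtx n → ℝ, IsFlux G J ∧
      ∃ (G' : Net n) (J' : Vtx n × Vtx n → ℝ),
        IsFlux G' J' ∧ ComplexBalanced G' J' ∧ FluxEquiv G J G' J' ∧
          verts G' ⊆ sources G) := by
  refine ⟨fun ⟨J, hJ, G', J', hJ', hCB', hE⟩ => ?_,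
    fun ⟨J, hJ, G', J', hJ', hCB', hE, _⟩ => ⟨J, hJ, G', J', hJ', hCB', hE⟩⟩
  rw [fluxEquiv_iff] at hE
  obtain ⟨G'', J'', hJ'', hCB'', hE'', hG''⟩ := exists_complexBalanced_verts_subset (sources G)
    G' J' hJ' hCB' fun v hv => (hE v).symm.trans (netOut_eq_zero_of_notMem_sources hv J)
  exact ⟨J, hJ, G'', J'', hJ'', hCB'', fluxEquiv_iff.2 fun v => (hE v).trans (hE'' v).symm, hG''⟩
end
end
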